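/- One-shot achievability for the point-to-point channel: Let q_X be a pmf on a finite set 𝒳 and q_{Y|X} a channel (stochastic map) from 𝒳 to a finite set 𝒴, and let M ≥ 1 be an integer. Then there exists an M-code, i.e. a stochastic encoder φ : [1:M] → 𝒳 and a stochastic decoder ψ : 𝒴 → [1:M], such that when the message M is uniform on [1:M], X is generated by φ from M, Y is generated by q_{Y|X} from X, and M̂ is generated by ψ from Y, the probability of correct decoding satisfies P(M̂ = M) ≥ E_{(X,Y) ~ q_X q_{Y|X}} [ 1 / (1 + (M − 1)·2^{−i_q(X;Y)}) ]. -/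

import Mathlib

open scoped BigOperators

/-- A pmf on a finite type, represented by a nonnegative real-valued function summing to 1. -/
structure FinPMF (α : Type) [Fintype α] where
  p : α → ℝ
  nonneg : ∀ a, 0 ≤ p a
  sum_eq_one : ∑ a, p a = 1

variable {𝓧 𝓨 : Type} [Fintype 𝓧] [Fintype 𝓨]

/-- Information density `i_q(x;y) = log₂ (q(x,y) / (q(x) q(y)))` for the joint pmf
`q(x,y) = qX(x) W(y|x)`. -/
noncomputable def iDens (qX : FinPMF 𝓧) (W : 𝓧 → FinPMF 𝓨) (x : 𝓧) (y : 𝓨) : ℝ :=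
  Real.logb 2 ((qX.p x * (W x).p y) / (qX.p x * ∑ x', qX.p x' * (W x').p y))

/-- Probability of correct decoding of an `M`-code `(enc, dec)` over channel `W`:
the message is uniform on `Fin M`, `X` is generated by the stochastic encoder,
`Y` by the channel, and `M̂` by the stochastic decoder. -/
noncomputable def pCorrect (M : ℕ) (W : 𝓧 → FinPMF 𝓨)
    (enc : Fin M → FinPMF 𝓧) (dec : 𝓨 → FinPMF (Fin M)) : ℝ :=
  ∑ m : Fin M, ∑ x : 𝓧, ∑ y : 𝓨,
    (1 / (M : ℝ)) * (enc m).p x * (W x).p y * (dec y).p m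

/-! Random coding with a likelihood decoder. Draw the `M` codewords i.i.d. from `q_X` and decode
`m` with probability proportional to `W(y | c m)`. Given that message `m` was sent as `x` and `y`
was received, the decoder succeeds with probability `W(y|x) / (W(y|x) + ∑_{j ≠ m} W(y | c j))`.
Averaging over the other `M - 1` codewords and applying Jensen's inequality to the convex map
`t ↦ t⁻¹` bounds this from below by `W(y|x) / (W(y|x) + (M - 1) q_Y(y))`, which is
`1 / (1 + (M - 1) 2^{-i_q(x;y)})`. Some codebook does at least as well as the average. -/

open Finset

lemma exists_sum_mul_le_apply {ι : Type*} [Fintype ι] (w f : ι → ℝ) (hw0 : ∀ i, 0 ≤ w i)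
    (hw1 : ∑ i, w i = 1) : ∃ i, ∑ j, w j * f j ≤ f i := by
  have : Nonempty ι := by
    by_contra h
    simp [not_nonempty_iff.mp h] at hw1
  obtain ⟨i, hi⟩ := Finite.exists_max f
  refine ⟨i, ?_⟩
  calc ∑ j, w j * f j ≤ ∑ j, w j * f i :=
        sum_le_sum fun j _ => mul_le_mul_of_nonneg_left (hi j) (hw0 j)
    _ = f i := by rw [← sum_mul, hw1, one_mul]

section IID

variable {α : Type*} [Fintype α] (q : α → ℝ)

lemma sum_pi_eq_sum_sum_insertNth {n : ℕ} (m : Fin (n + 1)) (F : (Fin (n + 1) → α) → ℝ) :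
    ∑ c, F c = ∑ x, ∑ r : Fin n → α, F (Fin.insertNth m x r) := by
  rw [← Fintype.sum_prod_type']
  exact (Fintype.sum_equiv (Fin.insertNthEquiv (fun _ => α) m) _ _ fun _ => rfl).symm

lemma sum_prod_pi_eq_one (hq : ∑ x, q x = 1) (n : ℕ) :
    ∑ r : Fin n → α, ∏ k, q (r k) = 1 := by
  rw [← Fintype.sum_pow, hq, one_pow]

lemma sum_prod_pi_mul_apply (hq : ∑ x, q x = 1) {n : ℕ} (m : Fin n) (g : α → ℝ) :
    ∑ r : Fin n → α, (∏ k, q (r k)) * g (r m) = ∑ x, q x * g x := by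
  cases n with
  | zero => exact m.elim0
  | succ n =>
    rw [sum_pi_eq_sum_sum_insertNth m]
    refine sum_congr rfl fun x _ => ?_
    simp_rw [Fin.prod_univ_succAbove _ m, Fin.insertNth_apply_same, Fin.insertNth_apply_succAbove]
    rw [← sum_mul, ← mul_sum, sum_prod_pi_eq_one q hq, mul_one]

lemma sum_prod_pi_mul_sum (hq : ∑ x, q x = 1) (n : ℕ) (g : α → ℝ) :
    ∑ r : Fin n → α, (∏ k, q (r k)) * ∑ j, g (r j) = n * ∑ x, q x * g x := by
  simp only [mul_sum]
  rw [sum_comm]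
  simp only [sum_prod_pi_mul_apply q hq, sum_const, card_univ, Fintype.card_fin, nsmul_eq_mul,
    mul_sum]

variable {q}

lemma sq_div_add_mean_le (hq0 : ∀ x, 0 ≤ q x) (hq : ∑ x, q x = 1) {g : α → ℝ}
    (hg : ∀ x, 0 ≤ g x) (n : ℕ) {a : ℝ} (ha : 0 ≤ a) :
    a ^ 2 / (a + n * ∑ x, q x * g x)
      ≤ ∑ r : Fin n → α, (∏ k, q (r k)) * (a ^ 2 / (a + ∑ j, g (r j))) := by
  rcases ha.eq_or_lt with rfl | ha
  · simp
  have hw0 : ∀ r ∈ (univ : Finset (Fin n → α)), 0 ≤ ∏ k, q (r k) :=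
    fun r _ => prod_nonneg fun k _ => hq0 (r k)
  have hpos : ∀ r ∈ (univ : Finset (Fin n → α)), a + ∑ j, g (r j) ∈ Set.Ioi 0 :=
    fun r _ => add_pos_of_pos_of_nonneg ha (sum_nonneg fun j _ => hg (r j))
  have mean :
      ∑ r : Fin n → α, (∏ k, q (r k)) * (a + ∑ j, g (r j)) = a + n * ∑ x, q x * g x := by
    simp_rw [mul_add]
    rw [sum_add_distrib, ← sum_mul, sum_prod_pi_eq_one q hq, one_mul, sum_prod_pi_mul_sum q hq]
  have jensen : (a + n * ∑ x, q x * g x)⁻¹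
      ≤ ∑ r : Fin n → α, (∏ k, q (r k)) * (a + ∑ j, g (r j))⁻¹ := by
    simpa [mean, zpow_neg_one] using
      (convexOn_zpow (𝕜 := ℝ) (-1)).map_sum_le hw0 (sum_prod_pi_eq_one q hq n) hpos
  calc a ^ 2 / (a + n * ∑ x, q x * g x)
      = a ^ 2 * (a + n * ∑ x, q x * g x)⁻¹ := div_eq_mul_inv _ _
    _ ≤ a ^ 2 * ∑ r : Fin n → α, (∏ k, q (r k)) * (a + ∑ j, g (r j))⁻¹ := by gcongr
    _ = _ := by
      rw [mul_sum]
      exact sum_congr rfl fun r _ => by ring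

lemma sum_mul_sq_div_add_mean_le (hq0 : ∀ x, 0 ≤ q x) (hq : ∑ x, q x = 1) {g : α → ℝ}
    (hg : ∀ x, 0 ≤ g x) {n : ℕ} (m : Fin (n + 1)) :
    ∑ x, q x * (g x ^ 2 / (g x + n * ∑ x', q x' * g x'))
      ≤ ∑ c : Fin (n + 1) → α, (∏ k, q (c k)) * (g (c m) ^ 2 / ∑ j, g (c j)) := by
  rw [sum_pi_eq_sum_sum_insertNth m]
  refine sum_le_sum fun x _ => ?_
  simp_rw [Fin.prod_univ_succAbove _ m, Fin.sum_univ_succAbove _ m, Fin.insertNth_apply_same,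
    Fin.insertNth_apply_succAbove, mul_assoc, ← mul_sum]
  exact mul_le_mul_of_nonneg_left (sq_div_add_mean_le hq0 hq hg n (hg x)) (hq0 x)

end IID

noncomputable def FinPMF.dirac {α : Type} [Fintype α] [DecidableEq α] (x : α) : FinPMF α where
  p a := if a = x then 1 else 0
  nonneg a := by split <;> norm_num
  sum_eq_one := by simp

/-- The stochastic likelihood decoder; the uniform fallback, used only when no codeword can produce
`y`, just makes it a pmf. -/
noncomputable def likelihoodDecoder {α β : Type} [Fintype β] (W : α → FinPMF β) {n : ℕ}
    (c : Fin (n + 1) → α) (y : β) : FinPMF (Fin (n + 1)) where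
  p m := if ∑ j, (W (c j)).p y = 0 then ((n : ℝ) + 1)⁻¹
    else (W (c m)).p y / ∑ j, (W (c j)).p y
  nonneg m := by
    split
    · positivity
    · exact div_nonneg ((W (c m)).nonneg y) (sum_nonneg fun _ _ => (W _).nonneg y)
  sum_eq_one := by
    split_ifs with h
    · simp only [sum_const, card_univ, Fintype.card_fin, nsmul_eq_mul]
      push_cast
      exact mul_inv_cancel₀ (by positivity)
    · rw [← sum_div, div_self h]

lemma pCorrect_dirac [DecidableEq 𝓧] (W : 𝓧 → FinPMF 𝓨) {M : ℕ} (c : Fin M → 𝓧)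
    (dec : 𝓨 → FinPMF (Fin M)) :
    pCorrect M W (fun m => FinPMF.dirac (c m)) dec
      = (1 / (M : ℝ)) * ∑ m, ∑ y, (W (c m)).p y * (dec y).p m := by
  simp [pCorrect, FinPMF.dirac, mul_sum, mul_assoc]

lemma mul_likelihoodDecoder {α β : Type} [Fintype β] (W : α → FinPMF β) {n : ℕ}
    (c : Fin (n + 1) → α) (y : β) (m : Fin (n + 1)) :
    (W (c m)).p y * (likelihoodDecoder W c y).p m = (W (c m)).p y ^ 2 / ∑ j, (W (c j)).p y := by
  by_cases h : ∑ j, (W (c j)).p y = 0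
  · have hm : (W (c m)).p y = 0 :=
      (sum_eq_zero_iff_of_nonneg fun j _ => (W (c j)).nonneg y).mp h m (mem_univ m)
    simp [hm]
  · simp only [likelihoodDecoder, h, if_false]
    ring

lemma le_sum_prod_mul_pCorrect [DecidableEq 𝓧] (qX : FinPMF 𝓧) (W : 𝓧 → FinPMF 𝓨) (n : ℕ) :
    ∑ y, ∑ x, qX.p x * ((W x).p y ^ 2 / ((W x).p y + n * ∑ x', qX.p x' * (W x').p y))
      ≤ ∑ c : Fin (n + 1) → 𝓧, (∏ k, qX.p (c k)) *
          pCorrect (n + 1) W (fun m => FinPMF.dirac (c m)) (likelihoodDecoder W c) := by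
  have hn : ((n + 1 : ℕ) : ℝ) ≠ 0 := by positivity
  calc ∑ y, ∑ x, qX.p x * ((W x).p y ^ 2 / ((W x).p y + n * ∑ x', qX.p x' * (W x').p y))
      = 1 / ((n + 1 : ℕ) : ℝ) * ∑ _m : Fin (n + 1), ∑ y, ∑ x,
          qX.p x * ((W x).p y ^ 2 / ((W x).p y + n * ∑ x', qX.p x' * (W x').p y)) := by
        rw [sum_const, card_univ, Fintype.card_fin, nsmul_eq_mul, ← mul_assoc, one_div,
          inv_mul_cancel₀ hn, one_mul]
    _ ≤ 1 / ((n + 1 : ℕ) : ℝ) * ∑ m : Fin (n + 1), ∑ y, ∑ c : Fin (n + 1) → 𝓧,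
          (∏ k, qX.p (c k)) * ((W (c m)).p y ^ 2 / ∑ j, (W (c j)).p y) := by
        gcongr with m _ y _
        exact sum_mul_sq_div_add_mean_le qX.nonneg qX.sum_eq_one (fun x => (W x).nonneg y) m
    _ = _ := by
        rw [sum_comm_cycle, mul_sum]
        refine sum_congr rfl fun c _ => ?_
        simp_rw [pCorrect_dirac, mul_likelihoodDecoder, ← mul_sum]
        ring

lemma rpow_neg_iDens (qX : FinPMF 𝓧) (W : 𝓧 → FinPMF 𝓨) {x : 𝓧} {y : 𝓨} (hx : 0 < qX.p x)
    (hy : 0 < (W x).p y) :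
    (2 : ℝ) ^ (-(iDens qX W x y)) = (∑ x', qX.p x' * (W x').p y) / (W x).p y := by
  have hY : 0 < ∑ x', qX.p x' * (W x').p y :=
    (mul_pos hx hy).trans_le <| single_le_sum (f := fun x' => qX.p x' * (W x').p y)
      (fun x' _ => mul_nonneg (qX.nonneg x') ((W x').nonneg y)) (mem_univ x)
  rw [iDens, mul_div_mul_left _ _ hx.ne', ← Real.logb_inv, inv_div,
    Real.rpow_logb two_pos (by norm_num) (div_pos hY hy)]

lemma mul_inv_one_add_mul_rpow_neg_iDens (qX : FinPMF 𝓧) (W : 𝓧 → FinPMF 𝓨) (n : ℕ) (x : 𝓧)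
    (y : 𝓨) :
    qX.p x * (W x).p y * (1 + n * (2 : ℝ) ^ (-(iDens qX W x y)))⁻¹
      = qX.p x * ((W x).p y ^ 2 / ((W x).p y + n * ∑ x', qX.p x' * (W x').p y)) := by
  rcases (qX.nonneg x).eq_or_lt with hx | hx
  · simp [← hx]
  rcases ((W x).nonneg y).eq_or_lt with hy | hy
  · simp [← hy]
  rw [rpow_neg_iDens qX W hx hy]
  field_simp

/-- One-shot achievability for the point-to-point channel:
there is an `M`-code with
`P(M̂ = M) ≥ E_{q_X q_{Y|X}} [ 1 / (1 + (M-1) 2^{-i_q(X;Y)}) ]`. -/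
theorem oneShot_point_to_point (qX : FinPMF 𝓧) (W : 𝓧 → FinPMF 𝓨)
    (M : ℕ) (hM : 1 ≤ M) :
    ∃ (enc : Fin M → FinPMF 𝓧) (dec : 𝓨 → FinPMF (Fin M)),
      pCorrect M W enc dec ≥
        ∑ x : 𝓧, ∑ y : 𝓨, qX.p x * (W x).p y *
          (1 + ((M : ℝ) - 1) * (2 : ℝ) ^ (-(iDens qX W x y)))⁻¹ := by
  classical
  obtain ⟨n, rfl⟩ := Nat.exists_eq_add_of_le' hM
  obtain ⟨c, hc⟩ := exists_sum_mul_le_apply (fun c : Fin (n + 1) → 𝓧 => ∏ k, qX.p (c k))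
    (fun c => pCorrect (n + 1) W (fun m => FinPMF.dirac (c m)) (likelihoodDecoder W c))
    (fun c => prod_nonneg fun k _ => qX.nonneg (c k)) (sum_prod_pi_eq_one qX.p qX.sum_eq_one _)
  refine ⟨fun m => FinPMF.dirac (c m), likelihoodDecoder W c, le_trans ?_ hc⟩
  push_cast
  simp only [add_sub_cancel_right, mul_inv_one_add_mul_rpow_neg_iDens]
  rw [sum_comm]
  exact le_sum_prod_mul_pCorrect qX W n
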